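/- arXiv:1701.04188 — 2 statements merged into one kernel-verified Lean document; each statement's English description precedes it below -/
import Mathlib

section
/- Let A ∈ ℕ with A ≥ 2 and let T = (V,E) be the tree growing at exponential rate A. Then for every N ∈ ℕ₊ there is no mixing embedding of T in Z^N. -/
open MeasureTheory ProbabilityTheory Filter
open scoped ENNReal NNReal

noncomputable section

/-- The supremum (ℓ∞) distance `d_{∞,ℤ^N}` on the lattice `ℤ^N`, with values in `ℕ`. -/
def distZ {N : ℕ} (x y : Fin N → ℤ) : ℕ :=
  Finset.univ.sup fun i => (x i - y i).natAbs

/-- A graph `G` with node set `V` has a *mixing embedding* in `ℤ^N` if `G` is isomorphic to a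
graph `G'` with node set `V' ⊆ ℤ^N` (i.e. there is an injection `φ : V → ℤ^N`, the graph
structure of `G'` being the one transported along `φ`) such that for every sequence of pairs
`((vᵢ, wᵢ) : i ∈ ℕ)` of nodes, boundedness of the graph distances `d_G(vᵢ, wᵢ)` implies
boundedness of the sup-distances `d_{∞,ℤ^N}(φ vᵢ, φ wᵢ)` of the images. -/
def MixingEmbedding {V : Type*} (G : SimpleGraph V) (N : ℕ) : Prop :=
  ∃ φ : V → (Fin N → ℤ), Function.Injective φ ∧
    ∀ vw : ℕ → V × V,
      (∃ M : ℕ, ∀ i, G.edist (vw i).1 (vw i).2 ≤ (M : ℕ∞)) →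
      (∃ M' : ℕ, ∀ i, distZ (φ (vw i).1) (φ (vw i).2) ≤ M')

/-- The α-mixing coefficient of a real-valued random field `Z` indexed by `V`, with respect to
an extended-ℕ-valued distance `ed` on the index set `V` and a measure `μ`:
`α(n)` is the supremum over index sets `I, J ⊆ V` with `d(I,J) ≥ n` of the supremum over
`A ∈ σ(Z_v : v ∈ I)`, `B ∈ σ(Z_w : w ∈ J)` of `|μ(A ∩ B) − μ(A)·μ(B)|`. -/
def alphaMix {Ω : Type*} [MeasurableSpace Ω] (μ : Measure Ω) {V : Type*}
    (ed : V → V → ℕ∞) (Z : V → Ω → ℝ) (n : ℕ) : ℝ :=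
  ⨆ I : Set V, ⨆ J : Set V, ⨆ (_ : ∀ v ∈ I, ∀ w ∈ J, (n : ℕ∞) ≤ ed v w),
  ⨆ A : Set Ω, ⨆ (_ : MeasurableSet[⨆ v ∈ I, MeasurableSpace.comap (Z v) inferInstance] A),
  ⨆ B : Set Ω, ⨆ (_ : MeasurableSet[⨆ w ∈ J, MeasurableSpace.comap (Z w) inferInstance] B),
    |(μ (A ∩ B)).toReal - (μ A).toReal * (μ B).toReal|

/-- The nodes of the tree growing at an exponential rate `A`:
`V = {(j,k) : j ∈ ℕ, 1 ≤ k ≤ A^j}`. -/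
def TreeNode (A : ℕ) : Type := {p : ℕ × ℕ // 1 ≤ p.2 ∧ p.2 ≤ A ^ p.1}

/-- The tree growing at an exponential rate `A`: the node `(j,k)` is joined to its children
`(j+1, A(k-1)+1), …, (j+1, Ak)`. -/
def expTree (A : ℕ) : SimpleGraph (TreeNode A) where
  Adj v w := (w.1.1 = v.1.1 + 1 ∧ A * (v.1.2 - 1) + 1 ≤ w.1.2 ∧ w.1.2 ≤ A * v.1.2)
    ∨ (v.1.1 = w.1.1 + 1 ∧ A * (w.1.2 - 1) + 1 ≤ v.1.2 ∧ v.1.2 ≤ A * w.1.2)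
  symm := ⟨fun v w h => Or.symm h⟩
  loopless := ⟨fun v h => by rcases h with ⟨h, -⟩ | ⟨h, -⟩ <;> omega⟩

/-- `V(j,k,P)`: the node set of the subtree of the tree growing at exponential rate `A`
rooted at the node `(j,k)` and consisting of `P` generations. -/
def subtreeNodes (A j k P : ℕ) : Set (TreeNode A) :=
  {v | j ≤ v.1.1 ∧ v.1.1 ≤ j + P - 1 ∧
    A ^ (v.1.1 - j) * (k - 1) + 1 ≤ v.1.2 ∧ v.1.2 ≤ A ^ (v.1.1 - j) * k}

/-- `N(P,L)`: the combinatorial sum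
`Σ_{h=0}^{⌊P−1−L/2⌋} A^h Σ_{i=max(1,L−(P−1−h))}^{min(L,P−1−h)} A^i (2·1{L=i} + (A−1)A^{L−i−1}·1{L>i})`.
(Here `⌊P−1−L/2⌋ = P−1−⌈L/2⌉` and `⌈L/2⌉ = (L+1)/2` in natural-number division.) -/
def npairs (A P L : ℕ) : ℕ :=
  ∑ h ∈ Finset.range (P - 1 - (L + 1) / 2 + 1),
    A ^ h * ∑ i ∈ Finset.Icc (max 1 (L - (P - 1 - h))) (min L (P - 1 - h)),
      A ^ i * (2 * (if L = i then 1 else 0) + (A - 1) * A ^ (L - i - 1) * (if i < L then 1 else 0))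

end

/-! Every tree edge is stretched by a bounded amount, so the `A ^ J` nodes of generation `J`
land injectively in an `ℓ∞`-ball of radius `O(J)` around the image of the root, which holds only
`O(J ^ N)` lattice points. -/

lemma distZ_triangle {N : ℕ} (x y z : Fin N → ℤ) : distZ x z ≤ distZ x y + distZ y z :=
  Finset.sup_le fun i hi => calc
    (x i - z i).natAbs ≤ (x i - y i).natAbs + (y i - z i).natAbs := by
      simpa using Int.natAbs_add_le (x i - y i) (y i - z i)
    _ ≤ distZ x y + distZ y z :=
      add_le_add (Finset.le_sup (f := fun i => (x i - y i).natAbs) hi)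
        (Finset.le_sup (f := fun i => (y i - z i).natAbs) hi)

lemma mem_piFinset_Icc_of_distZ_le {N R : ℕ} {x r : Fin N → ℤ} (h : distZ x r ≤ R) :
    x ∈ Fintype.piFinset fun i => Finset.Icc (r i - R) (r i + R) := by
  rw [Fintype.mem_piFinset]
  intro i
  have hi : (x i - r i).natAbs ≤ R :=
    (Finset.le_sup (f := fun i => (x i - r i).natAbs) (Finset.mem_univ i)).trans h
  rw [Finset.mem_Icc]
  omega

lemma card_le_of_injective_of_distZ_le {α : Type*} [Fintype α] {N R : ℕ} {f : α → Fin N → ℤ}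
    (hf : Function.Injective f) (r : Fin N → ℤ) (hR : ∀ a, distZ (f a) r ≤ R) :
    Fintype.card α ≤ (2 * R + 1) ^ N := by
  classical
  have hsub : Finset.univ.map ⟨f, hf⟩ ⊆
      Fintype.piFinset fun i => Finset.Icc (r i - R) (r i + R) := by
    intro x hx
    obtain ⟨a, -, rfl⟩ := Finset.mem_map.mp hx
    exact mem_piFinset_Icc_of_distZ_le (hR a)
  have hbox : ∀ i : Fin N, (Finset.Icc (r i - R) (r i + R)).card = 2 * R + 1 := by
    intro i
    rw [Int.card_Icc]
    omega
  simpa [Fintype.card_piFinset, hbox] using Finset.card_le_card hsub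

lemma exists_distZ_le_of_adj {V : Type*} {G : SimpleGraph V} {N : ℕ} {φ : V → Fin N → ℤ}
    (hmix : ∀ vw : ℕ → V × V, (∃ M : ℕ, ∀ i, G.edist (vw i).1 (vw i).2 ≤ (M : ℕ∞)) →
      ∃ M' : ℕ, ∀ i, distZ (φ (vw i).1) (φ (vw i).2) ≤ M') :
    ∃ M : ℕ, ∀ u v, G.Adj u v → distZ (φ u) (φ v) ≤ M := by
  by_contra! hunbdd
  choose u v hadj hfar using hunbdd
  obtain ⟨M', hM'⟩ := hmix (fun i => (u i, v i))
    ⟨1, fun i => by simpa using SimpleGraph.edist_le (hadj i).toWalk⟩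
  exact (hM' M').not_gt (hfar M')

lemma distZ_le_length_mul {V : Type*} {G : SimpleGraph V} {N M : ℕ} {φ : V → Fin N → ℤ}
    (hM : ∀ u v, G.Adj u v → distZ (φ u) (φ v) ≤ M) {u v : V} (p : G.Walk u v) :
    distZ (φ u) (φ v) ≤ p.length * M := by
  induction p with
  | nil => simp [distZ]
  | cons hadj p ih =>
    rw [SimpleGraph.Walk.length_cons, add_mul, one_mul, add_comm]
    exact (distZ_triangle _ _ _).trans (add_le_add (hM _ _ hadj) ih)

lemma exists_mul_add_one_pow_lt_pow {A : ℕ} (hA : 1 < A) (c N : ℕ) : ∃ J, (c * J + 1) ^ N < A ^ J := by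
  have hc : (0 : ℝ) < 1 / ((c : ℝ) + 1) ^ N := by positivity
  obtain ⟨J, hJ1, hJ⟩ := ((Filter.eventually_ge_atTop 1).and
    ((tendsto_pow_const_div_const_pow_of_one_lt N (Nat.one_lt_cast.mpr hA)).eventually
      (gt_mem_nhds hc))).exists
  refine ⟨J, ?_⟩
  have hAJ : (0 : ℝ) < (A : ℝ) ^ J := by positivity
  have hJ' : ((c : ℝ) + 1) ^ N * (J : ℝ) ^ N < (A : ℝ) ^ J := by
    rw [div_lt_div_iff₀ hAJ (by positivity), one_mul] at hJ
    linarith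
  have hlin : (c : ℝ) * J + 1 ≤ ((c : ℝ) + 1) * J := by
    have : (1 : ℝ) ≤ J := by exact_mod_cast hJ1
    linarith
  have hreal : ((c : ℝ) * J + 1) ^ N < (A : ℝ) ^ J :=
    (pow_le_pow_left₀ (by positivity) hlin N).trans_lt (by rwa [mul_pow])
  exact_mod_cast hreal

namespace TreeNode

def root (A : ℕ) : TreeNode A := ⟨(0, 1), le_rfl, by simp⟩

def ofGeneration (A J : ℕ) (k : Fin (A ^ J)) : TreeNode A := ⟨(J, k + 1), by omega, k.2⟩

lemma ofGeneration_injective (A J : ℕ) : Function.Injective (ofGeneration A J) := by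
  intro k l h
  have := congrArg (fun v : TreeNode A => v.1.2) h
  simp only [ofGeneration, add_left_inj] at this
  exact Fin.ext this

lemma exists_walk_root_length (A n : ℕ) (v : TreeNode A) (hv : v.1.1 = n) :
    ∃ p : (expTree A).Walk v (root A), p.length = n := by
  induction n generalizing v with
  | zero =>
    obtain ⟨⟨j, k⟩, hk1, hkA⟩ := v
    subst hv
    obtain rfl : k = 1 := by simp only [pow_zero] at hkA; omega
    exact ⟨.nil, rfl⟩
  | succ n ih =>
    obtain ⟨⟨j, k⟩, hk1, hkA⟩ := v
    subst hv
    dsimp only at hkA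
    have hA : 0 < A := Nat.pos_of_ne_zero fun h => by simp [h] at hkA; omega
    have hq : (k - 1) / A < A ^ n :=
      (Nat.div_lt_iff_lt_mul hA).mpr (by rw [← pow_succ]; omega)
    -- the parent of `(n + 1, k)` is `(n, (k - 1) / A + 1)`
    obtain ⟨p, hp⟩ := ih ⟨(n, (k - 1) / A + 1), Nat.le_add_left 1 _, hq⟩ rfl
    have hdiv := Nat.div_add_mod (k - 1) A
    have hmod := Nat.mod_lt (k - 1) hA
    have hlo : A * ((k - 1) / A) + 1 ≤ k := by omega
    have hhi : k ≤ A * ((k - 1) / A) + A := by omega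
    have hadj : (expTree A).Adj ⟨(n + 1, k), hk1, hkA⟩
        ⟨(n, (k - 1) / A + 1), Nat.le_add_left 1 _, hq⟩ :=
      Or.inr ⟨rfl, by simpa using hlo, by simpa [mul_add] using hhi⟩
    exact ⟨.cons hadj p, congrArg (· + 1) hp⟩

end TreeNode

theorem stmt4_general (A : ℕ) (hA : 2 ≤ A) (N : ℕ) :
    ¬ MixingEmbedding (expTree A) N := by
  rintro ⟨φ, hφ, hmix⟩
  obtain ⟨M, hM⟩ := exists_distZ_le_of_adj hmix
  obtain ⟨J, hJ⟩ := exists_mul_add_one_pow_lt_pow hA (2 * M) N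
  have hball : ∀ k, distZ (φ (TreeNode.ofGeneration A J k)) (φ (TreeNode.root A)) ≤ J * M := by
    intro k
    obtain ⟨p, hp⟩ := TreeNode.exists_walk_root_length A J (TreeNode.ofGeneration A J k) rfl
    exact (distZ_le_length_mul hM p).trans_eq (by rw [hp])
  have hcard := card_le_of_injective_of_distZ_le (hφ.comp (TreeNode.ofGeneration_injective A J))
    _ hball
  rw [Fintype.card_fin] at hcard
  exact hcard.not_gt (by rwa [mul_comm J M, ← mul_assoc])

/-- **The tree growing at an exponential rate `A ≥ 2` has no mixing embedding in any `ℤ^N`.** -/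
theorem stmt4 (A : ℕ) (hA : 2 ≤ A) (N : ℕ) (hN : 1 ≤ N) :
    ¬ MixingEmbedding (expTree A) N :=
  stmt4_general A hA N
end

section
/- Let T = (V,E) be the tree growing at exponential rate A and suppose the α-mixing coefficients of a random field on T decay at a super-exponential rate, i.e., there is a positive increasing function g with g(n) → ∞ as n → ∞ such that α_T(n) ≤ exp(−n·g(n)) for all n ∈ ℕ₊. Then the summability condition Σ_{k=1}^{2(P−1)} α_T(k)·N(P,k) ∈ O(P·A^P) holds, i.e., there is a constant c < ∞ with Σ_{k=1}^{2(P−1)} α_T(k)·N(P,k) ≤ c·P·A^P for all P ∈ ℕ₊. -/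
open MeasureTheory ProbabilityTheory Filter
open scoped ENNReal NNReal

/-!
For `A ≥ 1`, the inner sum of `N(P,k)` is at most `2A^k + P(A-1)A^(k-1)`. The factor `A - 1`
telescopes against the geometric sum over `h`, and the remaining sum over `h` has at most
`P` terms, each at most `A^m` with `m = P-1-⌈k/2⌉`. This gives `N(P,k) ≤ 3P·A^(P-1+⌊k/2⌋)`,
with no case split between `A = 1` and `A ≥ 2`. The sum in the theorem is therefore at most
`3P·A^(P-1)·Σ α(k)A^(k/2)`. This series converges: once `g(k) ≥ 1 + log A`, the bound
`α(k) ≤ exp(-k·g(k))` gives `α(k)A^k ≤ e^(-k)`.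
-/

open Finset

lemma pred_mul_geom_sum_le_pow (A n : ℕ) : (A - 1) * ∑ h ∈ range n, A ^ h ≤ A ^ n := by
  cases A with
  | zero => simp
  | succ B =>
    have := geom_sum_mul_add B n
    rw [Nat.add_sub_cancel, mul_comm]
    omega

lemma geom_sum_le_card_mul_pow {A : ℕ} (hA : 1 ≤ A) (n : ℕ) :
    ∑ h ∈ range (n + 1), A ^ h ≤ (n + 1) * A ^ n := by
  simpa using sum_le_card_nsmul (range (n + 1)) _ _
    fun h hh => Nat.pow_le_pow_right hA (Nat.lt_succ_iff.mp (mem_range.mp hh))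

lemma npairs_inner_le (A k a b : ℕ) :
    ∑ i ∈ Icc a b, A ^ i * (2 * (if k = i then 1 else 0) +
        (A - 1) * A ^ (k - i - 1) * (if i < k then 1 else 0))
      ≤ 2 * A ^ k + (b + 1 - a) * ((A - 1) * A ^ (k - 1)) := by
  have hterm : ∀ i ∈ Icc a b, A ^ i * (2 * (if k = i then 1 else 0) +
        (A - 1) * A ^ (k - i - 1) * (if i < k then 1 else 0))
      ≤ 2 * (if k = i then A ^ k else 0) + (A - 1) * A ^ (k - 1) := by
    intro i _
    rcases lt_trichotomy i k with hik | rfl | hik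
    · have : A ^ i * A ^ (k - i - 1) = A ^ (k - 1) := by rw [← pow_add]; congr 1; omega
      simp only [hik.ne', hik, if_false, if_true]
      nlinarith
    · simp; omega
    · simp [hik.ne, hik.not_gt]
  calc _ ≤ ∑ i ∈ Icc a b, (2 * (if k = i then A ^ k else 0) + (A - 1) * A ^ (k - 1)) :=
        sum_le_sum hterm
    _ ≤ 2 * A ^ k + (b + 1 - a) * ((A - 1) * A ^ (k - 1)) := by
        rw [sum_add_distrib, ← mul_sum, sum_ite_eq, sum_const, Nat.card_Icc, smul_eq_mul]
        gcongr
        split_ifs <;> simp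

lemma npairs_le {A : ℕ} (hA : 1 ≤ A) {P k : ℕ} (hk : 1 ≤ k) (hkP : k ≤ 2 * (P - 1)) :
    npairs A P k ≤ 3 * P * A ^ (P - 1 + k / 2) := by
  set m := P - 1 - (k + 1) / 2
  have hinner : ∀ h ∈ range (m + 1),
      ∑ i ∈ Icc (max 1 (k - (P - 1 - h))) (min k (P - 1 - h)), A ^ i * (2 * (if k = i then 1 else 0)
        + (A - 1) * A ^ (k - i - 1) * (if i < k then 1 else 0))
      ≤ 2 * A ^ k + P * ((A - 1) * A ^ (k - 1)) := fun h _ =>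
    (npairs_inner_le A k _ _).trans (by gcongr; omega)
  have hexp : A ^ (k - 1) * A ^ (m + 1) = A ^ k * A ^ m := by
    rw [← pow_add, ← pow_add]; congr 1; omega
  calc npairs A P k
      ≤ ∑ h ∈ range (m + 1), A ^ h * (2 * A ^ k + P * ((A - 1) * A ^ (k - 1))) :=
        sum_le_sum fun h hh => Nat.mul_le_mul_left _ (hinner h hh)
    _ = 2 * A ^ k * ∑ h ∈ range (m + 1), A ^ h
          + P * A ^ (k - 1) * ((A - 1) * ∑ h ∈ range (m + 1), A ^ h) := by
        rw [← sum_mul]; ring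
    _ ≤ 2 * A ^ k * ((m + 1) * A ^ m) + P * A ^ (k - 1) * A ^ (m + 1) := by
        gcongr
        · exact geom_sum_le_card_mul_pow hA m
        · exact pred_mul_geom_sum_le_pow A (m + 1)
    _ = (2 * (m + 1) + P) * A ^ (k + m) := by rw [mul_assoc P, hexp, pow_add]; ring
    _ ≤ 3 * P * A ^ (P - 1 + k / 2) := by
        rw [show k + m = P - 1 + k / 2 by omega]
        gcongr
        omega

lemma summable_mul_pow_of_le_exp_neg_mul {α g : ℕ → ℝ} (hα0 : ∀ n, 0 ≤ α n)
    (hgtop : Tendsto g atTop atTop) (hαg : ∀ n : ℕ, 1 ≤ n → α n ≤ Real.exp (-(n : ℝ) * g n))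
    {x : ℝ} (hx : 0 < x) : Summable fun n => α n * x ^ n := by
  refine .of_norm_bounded_eventually_nat
    (summable_geometric_of_lt_one (Real.exp_pos (-1)).le (Real.exp_lt_one_iff.mpr (by norm_num))) ?_
  filter_upwards [hgtop.eventually_ge_atTop (1 + Real.log x), eventually_ge_atTop 1]
    with n hgn hn
  rw [Real.norm_of_nonneg (mul_nonneg (hα0 n) (by positivity)), ← Real.exp_log hx,
    ← Real.exp_nat_mul, ← Real.exp_nat_mul]
  calc α n * Real.exp (n * Real.log x)
      ≤ Real.exp (-(n : ℝ) * g n) * Real.exp (n * Real.log x) := by gcongr; exact hαg n hn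
    _ ≤ Real.exp (n * -1) := by
        rw [← Real.exp_add]
        gcongr
        nlinarith [(Nat.cast_nonneg n : (0 : ℝ) ≤ n)]

theorem stmt12_general (A : ℕ) (hA : 1 ≤ A) (α : ℕ → ℝ) (hα0 : ∀ n, 0 ≤ α n) (g : ℕ → ℝ)
    (hgtop : Tendsto g atTop atTop)
    (hαg : ∀ n : ℕ, 1 ≤ n → α n ≤ Real.exp (-(n : ℝ) * g n)) :
    ∃ c : ℝ, ∀ P : ℕ, 1 ≤ P →
      ∑ k ∈ Finset.Icc 1 (2 * (P - 1)), α k * (npairs A P k : ℝ) ≤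
        c * (P : ℝ) * (A : ℝ) ^ P := by
  have hA' : (1 : ℝ) ≤ A := by exact_mod_cast hA
  have hsum : Summable fun k => α k * (A : ℝ) ^ (k / 2) :=
    (summable_mul_pow_of_le_exp_neg_mul hα0 hgtop hαg (by positivity)).of_nonneg_of_le
      (fun k => mul_nonneg (hα0 k) (by positivity))
      (fun k => mul_le_mul_of_nonneg_left (pow_le_pow_right₀ hA' (Nat.div_le_self k 2)) (hα0 k))
  set S := ∑' k, α k * (A : ℝ) ^ (k / 2)
  have hS : 0 ≤ S := tsum_nonneg fun k => mul_nonneg (hα0 k) (by positivity)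
  refine ⟨3 * S, fun P hP => ?_⟩
  calc ∑ k ∈ Icc 1 (2 * (P - 1)), α k * (npairs A P k : ℝ)
      ≤ ∑ k ∈ Icc 1 (2 * (P - 1)), 3 * P * (A : ℝ) ^ (P - 1) * (α k * (A : ℝ) ^ (k / 2)) := by
        refine sum_le_sum fun k hk => ?_
        rw [mem_Icc] at hk
        calc α k * (npairs A P k : ℝ) ≤ α k * (3 * P * (A : ℝ) ^ (P - 1 + k / 2)) := by
              gcongr
              · exact hα0 k
              · exact_mod_cast npairs_le hA hk.1 hk.2
          _ = _ := by rw [pow_add]; ring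
    _ = 3 * P * (A : ℝ) ^ (P - 1) * ∑ k ∈ Icc 1 (2 * (P - 1)), α k * (A : ℝ) ^ (k / 2) :=
        (mul_sum ..).symm
    _ ≤ 3 * P * (A : ℝ) ^ (P - 1) * S := by
        gcongr
        exact hsum.sum_le_tsum _ fun k _ => mul_nonneg (hα0 k) (by positivity)
    _ ≤ 3 * S * P * (A : ℝ) ^ P := by
        rw [show 3 * S * P * (A : ℝ) ^ P = 3 * P * (A : ℝ) ^ P * S by ring]
        gcongr
        omega

/-- **Super-exponentially decaying mixing coefficients satisfy the summability condition.**
If a nonincreasing sequence `α : ℕ → [0,1]` of α-mixing coefficients decays at a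
super-exponential rate, i.e. `α(n) ≤ exp(−n·g(n))` for a positive increasing function `g`
with `g(n) → ∞`, then `Σ_{k=1}^{2(P−1)} α(k)·N(P,k) ∈ O(P·A^P)`. -/
theorem stmt12 (A : ℕ) (hA : 1 ≤ A) (α : ℕ → ℝ) (hmono : Antitone α)
    (hα0 : ∀ n, 0 ≤ α n) (hα1 : ∀ n, α n ≤ 1)
    (g : ℕ → ℝ) (hgpos : ∀ n, 0 < g n) (hgmono : Monotone g)
    (hgtop : Tendsto g atTop atTop)
    (hαg : ∀ n : ℕ, 1 ≤ n → α n ≤ Real.exp (-(n : ℝ) * g n)) :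
    ∃ c : ℝ, ∀ P : ℕ, 1 ≤ P →
      ∑ k ∈ Finset.Icc 1 (2 * (P - 1)), α k * (npairs A P k : ℝ) ≤
        c * (P : ℝ) * (A : ℝ) ^ P :=
  stmt12_general A hA α hα0 g hgtop hαg
end
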